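/- arXiv:2506.20427 — 5 statements merged into one kernel-verified Lean document; each statement's English description precedes it below -/
import Mathlib

section
/- Let W be a nonzero complex 3×3 matrix that is symmetric (Wᵀ = W). Then W·W = 0 (matrix product) if and only if there exists a vector l ∈ ℂ³ with l·l = 0 (bilinear dot product, no conjugation) such that W = l lᵀ (the matrix with entries W_{ij} = l_i l_j). Moreover, in this case l ≠ 0 and the trace of W is zero. -/
open Matrix BigOperators

/-!
`W * W = 0` puts the range of `W` inside its kernel, so `2 · rank W ≤ 3` and `W` has rank at
most one. A symmetric matrix of rank at most one over an algebraically closed field is `l lᵀ`: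
take `l` proportional to a column through a nonzero diagonal entry. Finally
`(l lᵀ)² = (l ⬝ᵥ l) • l lᵀ` and `trace (l lᵀ) = l ⬝ᵥ l`.
-/

namespace Matrix

variable {m n K : Type*} [Field K] [Fintype n]

theorem two_mul_rank_le_of_mul_self_eq_zero {A : Matrix n n K} (h : A * A = 0) :
    2 * A.rank ≤ Fintype.card n := by
  have hrange : LinearMap.range A.mulVecLin ≤ LinearMap.ker A.mulVecLin := by
    rw [LinearMap.range_le_ker_iff, ← mulVecLin_mul, h, mulVecLin_zero]
  have hdim := A.mulVecLin.finrank_range_add_finrank_ker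
  rw [Module.finrank_fintype_fun_eq_card] at hdim
  have hle := Submodule.finrank_mono hrange
  unfold rank
  omega

theorem exists_eq_vecMulVec_of_rank_le_one {A : Matrix m n K} (h : A.rank ≤ 1) :
    ∃ u : m → K, ∃ v : n → K, A = vecMulVec u v := by
  classical
  obtain ⟨u, hu⟩ := finrank_le_one_iff.mp h
  choose v hv using fun j => hu ⟨A.col j, A.mulVec_single_one j ▸ LinearMap.mem_range_self _ _⟩
  refine ⟨u, v, ext fun i j => ?_⟩
  have := congrFun (congrArg Subtype.val (hv j)) i
  simp only [SetLike.val_smul, Pi.smul_apply, smul_eq_mul, col_apply] at this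
  rw [vecMulVec_apply, ← this, mul_comm]

theorem IsSymm.exists_eq_vecMulVec_self_of_rank_le_one [IsAlgClosed K] {A : Matrix n n K}
    (hA : A.IsSymm) (h : A.rank ≤ 1) : ∃ l : n → K, A = vecMulVec l l := by
  obtain ⟨u, v, rfl⟩ := exists_eq_vecMulVec_of_rank_le_one h
  have hsymm (i j : n) : u i * v j = u j * v i := by
    simpa [vecMulVec_apply] using (hA.apply i j).symm
  by_cases hdiag : ∀ k, u k * v k = 0
  · refine ⟨0, Matrix.ext fun i j => ?_⟩
    have : (u i * v j) ^ 2 = 0 := by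
      linear_combination (u i * v j) * hsymm i j + (u j * v j) * hdiag i
    simpa [vecMulVec_apply] using this
  obtain ⟨k, hk⟩ := not_forall.mp hdiag
  obtain ⟨s, hs⟩ := IsAlgClosed.exists_eq_mul_self (u k * v k)
  have hs0 : s ≠ 0 := by rintro rfl; simp_all
  refine ⟨fun i => u i * v k / s, Matrix.ext fun i j => ?_⟩
  simp only [vecMulVec_apply]
  field_simp
  linear_combination -(u i * v k) * hsymm j k - (u i * v j) * hs

theorem vecMulVec_self_mul_self {R : Type*} [CommSemiring R] (l : n → R) :
    vecMulVec l l * vecMulVec l l = (l ⬝ᵥ l) • vecMulVec l l := by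
  rw [vecMulVec_mul_vecMulVec, vecMulVec_smul]

end Matrix

/-- A nonzero symmetric complex 3×3 matrix `W` satisfies `W·W = 0` iff
`W = l lᵀ` for some vector `l` with `l·l = 0` (bilinear dot product); moreover, in
this case any such `l` is nonzero and the trace of `W` vanishes. -/
theorem typeN_canonical_form (W : Matrix (Fin 3) (Fin 3) ℂ)
    (hW : W ≠ 0) (hsym : Wᵀ = W) :
    (W * W = 0 ↔ ∃ l : Fin 3 → ℂ, (∑ i, l i * l i) = 0 ∧ W = Matrix.vecMulVec l l) ∧
    (W * W = 0 →
      (∀ l : Fin 3 → ℂ, W = Matrix.vecMulVec l l → l ≠ 0) ∧ Matrix.trace W = 0) := by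
  have hnull : W * W = 0 ↔ ∃ l : Fin 3 → ℂ, l ⬝ᵥ l = 0 ∧ W = vecMulVec l l := by
    constructor
    · intro h
      have hrank : W.rank ≤ 1 := by
        have h3 := two_mul_rank_le_of_mul_self_eq_zero h
        rw [Fintype.card_fin] at h3
        omega
      obtain ⟨l, rfl⟩ := IsSymm.exists_eq_vecMulVec_self_of_rank_le_one hsym hrank
      rw [vecMulVec_self_mul_self, smul_eq_zero] at h
      exact ⟨l, h.resolve_right hW, rfl⟩
    · rintro ⟨l, hl, rfl⟩
      rw [vecMulVec_self_mul_self, hl, zero_smul]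
  refine ⟨hnull, fun h => ⟨?_, ?_⟩⟩
  · rintro l rfl rfl
    exact hW (vecMulVec_zero 0)
  · obtain ⟨l, hl, rfl⟩ := hnull.mp h
    rwa [trace_vecMulVec]
end

section
/- Let F be a null 2-form on Minkowski space, i.e., F ≠ 0, (F,F) = 0 and (*F,F) = 0. Then there exists a future-pointing null vector ℓ ≠ 0 such that F(ℓ) = 0 and (*F)(ℓ) = 0; moreover, every vector v satisfying F(v) = 0 and (*F)(v) = 0 is a scalar multiple of ℓ. -/
open Matrix BigOperators

noncomputable section

/-- Minkowski space: ℝ⁴. -/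
abbrev V4 : Type := Fin 4 → ℝ

/-- The signature signs of η = diag(−1,1,1,1). -/
def etaSgn (i : Fin 4) : ℝ := if i = 0 then -1 else 1

/-- The Lorentzian bilinear form η(x,y) = −x⁰y⁰ + x¹y¹ + x²y² + x³y³. -/
def etaB (x y : V4) : ℝ := ∑ i, etaSgn i * x i * y i

/-- Action of a 2-form on a vector: F(x)^α = η^{αμ} F_{μν} x^ν. -/
def act (F : Matrix (Fin 4) (Fin 4) ℝ) (x : V4) : V4 :=
  fun a => etaSgn a * ∑ b, F a b * x b

/-- The product of 2-forms: (F,G) = ½ F_{αβ} G^{αβ}. -/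
def formInner (F G : Matrix (Fin 4) (Fin 4) ℝ) : ℝ :=
  (1 / 2) * ∑ a, ∑ b, etaSgn a * etaSgn b * F a b * G a b

/-- The Levi-Civita symbol on four indices, with ε₀₁₂₃ = 1. -/
def eps (a b c d : Fin 4) : ℝ :=
  Matrix.det (Matrix.of fun i j => if ![a, b, c, d] i = j then (1 : ℝ) else 0)

/-- The Hodge dual: (*F)_{αβ} = ½ ε_{αβμν} F^{μν}. -/
def hodge (F : Matrix (Fin 4) (Fin 4) ℝ) : Matrix (Fin 4) (Fin 4) ℝ :=
  Matrix.of fun a b => (1 / 2) * ∑ m, ∑ n, eps a b m n * (etaSgn m * etaSgn n * F m n)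

/-- Exterior product of vectors: (u∧v)_{αβ} = u_α v_β − u_β v_α, with indices lowered by η. -/
def wedge (u v : V4) : Matrix (Fin 4) (Fin 4) ℝ :=
  Matrix.of fun a b => (etaSgn a * u a) * (etaSgn b * v b) - (etaSgn b * u b) * (etaSgn a * v a)

/-- A null 2-form: a nonzero antisymmetric matrix F with (F,F) = 0 and (*F,F) = 0. -/
def IsNullForm (F : Matrix (Fin 4) (Fin 4) ℝ) : Prop :=
  Fᵀ = -F ∧ F ≠ 0 ∧ formInner F F = 0 ∧ formInner (hodge F) F = 0

/-- A t-volume: an antisymmetric matrix U with (U,U) = −1 and (*U,U) = 0. -/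
def IsTVolume (U : Matrix (Fin 4) (Fin 4) ℝ) : Prop :=
  Uᵀ = -U ∧ formInner U U = -1 ∧ formInner (hodge U) U = 0

/-!
Split `F` into its electric and magnetic parts `E, B ∈ ℝ³`. Then `*F` has parts `(B, -E)`, and
`F` is null exactly when `|E| = |B|` and `E ⬝ B = 0`, with `E ≠ 0`. The vector
`ℓ = (|E|², B × E)` is annihilated by `F` and `*F` by the expansion of the vector triple product,
and is null by Lagrange's identity `|B × E|² = |B|²|E|² - (B ⬝ E)²`. Conversely, if `v = (t, w)`
is annihilated by `F` and `*F`, then `E ⬝ w = 0` and `t B = E × w`, so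
`t (B × E) = (E × w) × E = |E|² w`, that is `v = (t / |E|²) ℓ`.
-/

-- `F₀ᵢ = Eᵢ` and `Fᵢⱼ = εᵢⱼₖ Bₖ`: the electric and magnetic fields of `F`.
def ofFields (E B : Fin 3 → ℝ) : Matrix (Fin 4) (Fin 4) ℝ :=
  !![0, E 0, E 1, E 2; -E 0, 0, B 2, -B 1; -E 1, -B 2, 0, B 0; -E 2, B 1, -B 0, 0]

lemma ofFields_zero : ofFields 0 0 = 0 := by
  ext a b
  fin_cases a <;> fin_cases b <;> simp [ofFields]

lemma exists_eq_ofFields {F : Matrix (Fin 4) (Fin 4) ℝ} (hF : Fᵀ = -F) :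
    ∃ E B, F = ofFields E B := by
  have hswap (a b : Fin 4) : F b a = -F a b := by simpa using congrFun (congrFun hF a) b
  have hdiag (a : Fin 4) : F a a = 0 := by linarith [hswap a a]
  refine ⟨![F 0 1, F 0 2, F 0 3], ![F 2 3, F 3 1, F 1 2], ?_⟩
  ext a b
  fin_cases a <;> fin_cases b <;>
    simp [ofFields, hdiag, hswap _ (0 : Fin 4), hswap 2 1, hswap 3 1, hswap 3 2]

set_option maxHeartbeats 4000000 in
lemma hodge_ofFields (E B : Fin 3 → ℝ) : hodge (ofFields E B) = ofFields B (-E) := by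
  ext a b
  fin_cases a <;> fin_cases b <;>
    · simp +decide [hodge, ofFields, eps, etaSgn, det_succ_row_zero, Fin.sum_univ_succ]
      try ring

lemma formInner_ofFields (E B E' B' : Fin 3 → ℝ) :
    formInner (ofFields E B) (ofFields E' B') = B ⬝ᵥ B' - E ⬝ᵥ E' := by
  simp [formInner, ofFields, etaSgn, Fin.sum_univ_four, dotProduct, Fin.sum_univ_three]
  ring

lemma act_ofFields (E B w : Fin 3 → ℝ) (t : ℝ) :
    act (ofFields E B) (vecCons t w) = vecCons (-(E ⬝ᵥ w)) (w ⨯₃ B - t • E) := by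
  ext a
  fin_cases a <;> simp [act, ofFields, etaSgn, Fin.sum_univ_four, dotProduct, Fin.sum_univ_three,
    cross_apply, vecHead, vecTail] <;> ring

lemma etaB_cons (s t : ℝ) (v w : Fin 3 → ℝ) :
    etaB (vecCons s v) (vecCons t w) = -(s * t) + v ⬝ᵥ w := by
  simp [etaB, Fin.sum_univ_succ, etaSgn, dotProduct]

lemma dotProduct_self_smul_eq_smul_cross {R : Type*} [CommRing R] {E B w : Fin 3 → R} {t : R}
    (hEw : E ⬝ᵥ w = 0) (h : t • B = E ⨯₃ w) : (E ⬝ᵥ E) • w = t • (B ⨯₃ E) := by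
  calc (E ⬝ᵥ E) • w = (E ⬝ᵥ E) • w - (w ⬝ᵥ E) • E := by
        rw [dotProduct_comm w, hEw, zero_smul, sub_zero]
    _ = (E ⨯₃ w) ⨯₃ E := (cross_cross_eq_smul_sub_smul E w E).symm
    _ = t • (B ⨯₃ E) := by rw [← h, LinearMap.map_smul₂]

def nullDirection (E B : Fin 3 → ℝ) : V4 := vecCons (E ⬝ᵥ E) (B ⨯₃ E)

section NullFields

variable {E B : Fin 3 → ℝ}

lemma etaB_nullDirection (hEB : E ⬝ᵥ B = 0) (hBB : B ⬝ᵥ B = E ⬝ᵥ E) :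
    etaB (nullDirection E B) (nullDirection E B) = 0 := by
  rw [nullDirection, etaB_cons, cross_dot_cross, hBB, dotProduct_comm B, hEB]
  ring

lemma act_ofFields_nullDirection (hEB : E ⬝ᵥ B = 0) (hBB : B ⬝ᵥ B = E ⬝ᵥ E) :
    act (ofFields E B) (nullDirection E B) = 0 := by
  rw [nullDirection, act_ofFields, dot_cross_self, cross_cross_eq_smul_sub_smul, hBB, hEB]
  simp

lemma act_ofFields_dual_nullDirection (hEB : E ⬝ᵥ B = 0) :
    act (ofFields B (-E)) (nullDirection E B) = 0 := by
  rw [nullDirection, act_ofFields, dot_self_cross, map_neg, cross_cross_eq_smul_sub_smul,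
    dotProduct_comm B, hEB]
  simp

lemma eq_smul_nullDirection (hE : E ≠ 0) {v : V4} (hF : act (ofFields E B) v = 0)
    (hdF : act (ofFields B (-E)) v = 0) : v = (v 0 / (E ⬝ᵥ E)) • nullDirection E B := by
  have hEE : E ⬝ᵥ E ≠ 0 := dotProduct_self_eq_zero.not.mpr hE
  obtain ⟨t, w, rfl⟩ : ∃ t w, v = vecCons t w := ⟨_, _, (cons_head_tail v).symm⟩
  rw [act_ofFields, cons_eq_zero_iff] at hF hdF
  rw [map_neg, cross_anticomm, sub_eq_zero] at hdF
  have key := dotProduct_self_smul_eq_smul_cross (neg_eq_zero.mp hF.1) hdF.2.symm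
  rw [nullDirection, smul_cons, smul_eq_mul, cons_val_zero, div_mul_cancel₀ _ hEE,
    div_eq_inv_mul, mul_smul, ← key, inv_smul_smul₀ hEE]

end NullFields

/-- A null 2-form admits a future-pointing null vector ℓ ≠ 0 annihilated
by F and *F, and every common annihilator of F and *F is a multiple of ℓ. -/
theorem nullForm_fundamental_direction (F : Matrix (Fin 4) (Fin 4) ℝ)
    (hF : IsNullForm F) :
    ∃ ℓ : V4, ℓ ≠ 0 ∧ etaB ℓ ℓ = 0 ∧ 0 < ℓ 0 ∧
      act F ℓ = 0 ∧ act (hodge F) ℓ = 0 ∧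
      ∀ v : V4, act F v = 0 → act (hodge F) v = 0 → ∃ c : ℝ, v = c • ℓ := by
  obtain ⟨hA, hne, hFF, hFdF⟩ := hF
  obtain ⟨E, B, rfl⟩ := exists_eq_ofFields hA
  rw [formInner_ofFields] at hFF
  rw [hodge_ofFields, formInner_ofFields, neg_dotProduct, dotProduct_comm B] at hFdF
  rw [hodge_ofFields]
  have hBB : B ⬝ᵥ B = E ⬝ᵥ E := sub_eq_zero.mp hFF
  have hEB : E ⬝ᵥ B = 0 := by linarith
  have hE : E ≠ 0 := by
    rintro rfl
    rw [dotProduct_zero, dotProduct_self_eq_zero] at hBB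
    exact hne (hBB ▸ ofFields_zero)
  have hpos : 0 < nullDirection E B 0 := dotProduct_self_star_pos_iff.mpr hE
  refine ⟨nullDirection E B, fun h => hpos.ne' (by simp [h]), etaB_nullDirection hEB hBB, hpos,
    act_ofFields_nullDirection hEB hBB, act_ofFields_dual_nullDirection hEB,
    fun v hv hdv => ⟨_, eq_smul_nullDirection hE hv hdv⟩⟩

end
end

section
/- Let F be a null 2-form on Minkowski space. Then there exists a unique future-pointing null vector ℓ such that F(F(x)) = −η(ℓ,x)·ℓ for every x ∈ ℝ⁴. Consequently η(F(F(x)),x) = −η(ℓ,x)² for all x, and for every future-pointing timelike vector x one has η(ℓ,x) < 0, hence −η(F(F(x)),x) > 0 and ℓ = F(F(x)) / √(−η(F(F(x)),x)). -/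
open Matrix BigOperators

noncomputable section

theorem det_fin_four' (A : Matrix (Fin 4) (Fin 4) ℝ) : A.det =
    A 0 0 * (A 1 1 * (A 2 2 * A 3 3 - A 2 3 * A 3 2) - A 1 2 * (A 2 1 * A 3 3 - A 2 3 * A 3 1) + A 1 3 * (A 2 1 * A 3 2 - A 2 2 * A 3 1))
  - A 0 1 * (A 1 0 * (A 2 2 * A 3 3 - A 2 3 * A 3 2) - A 1 2 * (A 2 0 * A 3 3 - A 2 3 * A 3 0) + A 1 3 * (A 2 0 * A 3 2 - A 2 2 * A 3 0))
  + A 0 2 * (A 1 0 * (A 2 1 * A 3 3 - A 2 3 * A 3 1) - A 1 1 * (A 2 0 * A 3 3 - A 2 3 * A 3 0) + A 1 3 * (A 2 0 * A 3 1 - A 2 1 * A 3 0))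
  - A 0 3 * (A 1 0 * (A 2 1 * A 3 2 - A 2 2 * A 3 1) - A 1 1 * (A 2 0 * A 3 2 - A 2 2 * A 3 0) + A 1 2 * (A 2 0 * A 3 1 - A 2 1 * A 3 0)) := by
  rw [Matrix.det_succ_row_zero]
  simp [Fin.sum_univ_four, Matrix.det_fin_three, Matrix.submatrix_apply,
    show (Fin.succ 0 : Fin 4) = 1 from rfl, show (Fin.succ 1 : Fin 4) = 2 from rfl,
    show (Fin.succ 2 : Fin 4) = 3 from rfl,
    show ((0:Fin 4).succAbove 0 : Fin 4) = 1 by decide, show ((0:Fin 4).succAbove 1 : Fin 4) = 2 by decide,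
    show ((0:Fin 4).succAbove 2 : Fin 4) = 3 by decide,
    show ((1:Fin 4).succAbove 0 : Fin 4) = 0 by decide, show ((1:Fin 4).succAbove 1 : Fin 4) = 2 by decide,
    show ((1:Fin 4).succAbove 2 : Fin 4) = 3 by decide,
    show ((2:Fin 4).succAbove 0 : Fin 4) = 0 by decide, show ((2:Fin 4).succAbove 1 : Fin 4) = 1 by decide,
    show ((2:Fin 4).succAbove 2 : Fin 4) = 3 by decide,
    show ((3:Fin 4).succAbove 0 : Fin 4) = 0 by decide, show ((3:Fin 4).succAbove 1 : Fin 4) = 1 by decide,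
    show ((3:Fin 4).succAbove 2 : Fin 4) = 2 by decide,
    show (((3:Fin 4):ℕ)) = 3 from rfl]
  ring

theorem aux_timelike {l0 l1 l2 l3 x0 x1 x2 x3 : ℝ} (hl : l0 ^ 2 = l1 ^ 2 + l2 ^ 2 + l3 ^ 2)
    (hl0 : 0 < l0) (hx : x1 ^ 2 + x2 ^ 2 + x3 ^ 2 < x0 ^ 2) (hx0 : 0 < x0) :
    -(l0 * x0) + (l1 * x1 + l2 * x2 + l3 * x3) < 0 := by
  have hs2 : (l1 * x1 + l2 * x2 + l3 * x3) ^ 2 ≤ l0 ^ 2 * (x1 ^ 2 + x2 ^ 2 + x3 ^ 2) := by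
    rw [hl]
    nlinarith [sq_nonneg (l1 * x2 - l2 * x1), sq_nonneg (l1 * x3 - l3 * x1),
      sq_nonneg (l2 * x3 - l3 * x2)]
  have h3 : l0 ^ 2 * (x1 ^ 2 + x2 ^ 2 + x3 ^ 2) < l0 ^ 2 * x0 ^ 2 := by
    have h4 := mul_pos hl0 hl0
    nlinarith
  nlinarith [hs2, h3, mul_pos hl0 hx0]

theorem aux_sq_pos {c : ℝ} (h : c < 0) : 0 < -(-c ^ 2) := by nlinarith

theorem aux_sq_eq_of_pos {a b : ℝ} (ha : 0 < a) (hb : 0 < b) (h : a * a = b * b) : a = b := by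
  nlinarith

theorem etaB_smul_left (c : ℝ) (y x : V4) : etaB (c • y) x = c * etaB y x := by
  simp [etaB, Fin.sum_univ_four]; try ring

set_option maxHeartbeats 1000000 in
/-- For a null 2-form F there is a unique future-pointing null vector ℓ
with F(F(x)) = −η(ℓ,x)·ℓ for all x; consequently η(F(F(x)),x) = −η(ℓ,x)² and, for a
future-pointing timelike x, one has η(ℓ,x) < 0, −η(F(F(x)),x) > 0, and
ℓ = F(F(x))/√(−η(F(F(x)),x)). -/
theorem nullForm_fundamental_vector_formula (F : Matrix (Fin 4) (Fin 4) ℝ)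
    (hF : IsNullForm F) :
    (∃! ℓ : V4, etaB ℓ ℓ = 0 ∧ 0 < ℓ 0 ∧
        ∀ x : V4, act F (act F x) = (-(etaB ℓ x)) • ℓ) ∧
    ∀ ℓ : V4,
      (etaB ℓ ℓ = 0 ∧ 0 < ℓ 0 ∧ ∀ x : V4, act F (act F x) = (-(etaB ℓ x)) • ℓ) →
      (∀ x : V4, etaB (act F (act F x)) x = -(etaB ℓ x) ^ 2) ∧
      ∀ x : V4, etaB x x < 0 → 0 < x 0 →
        etaB ℓ x < 0 ∧ 0 < -(etaB (act F (act F x)) x) ∧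
        ℓ = (Real.sqrt (-(etaB (act F (act F x)) x)))⁻¹ • act F (act F x) := by
  obtain ⟨hA, hne, hN1, hN2⟩ := hF
  have anti : ∀ i j : Fin 4, F j i = -F i j := fun i j => by
    have := congrFun (congrFun hA i) j; simpa [Matrix.transpose_apply] using this
  have z00 : F 0 0 = 0 := by linarith [anti 0 0]
  have z11 : F 1 1 = 0 := by linarith [anti 1 1]
  have z22 : F 2 2 = 0 := by linarith [anti 2 2]
  have z33 : F 3 3 = 0 := by linarith [anti 3 3]
  -- the six independent entries
  -- E = (F 0 1, F 0 2, F 0 3), B = (F 2 3, F 3 1, F 1 2)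
  -- constraint 1 : |B|^2 = |E|^2
  have hs0 : etaSgn 0 = -1 := by simp [etaSgn]
  have hs1 : etaSgn 1 = 1 := by simp [etaSgn]
  have hs2 : etaSgn 2 = 1 := by simp [etaSgn]
  have hs3 : etaSgn 3 = 1 := by simp [etaSgn]
  have h1 : F 2 3 ^ 2 + F 3 1 ^ 2 + F 1 2 ^ 2 = F 0 1 ^ 2 + F 0 2 ^ 2 + F 0 3 ^ 2 := by
    simp only [formInner, Fin.sum_univ_four, hs0, hs1, hs2, hs3] at hN1
    simp only [anti 0 1, anti 0 2, anti 0 3, anti 1 2, anti 3 1, anti 2 3,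
      z00, z11, z22, z33] at hN1
    linear_combination hN1
  -- constraint 2 : E · B = 0
  have h2 : F 0 1 * F 2 3 + F 0 2 * F 3 1 + F 0 3 * F 1 2 = 0 := by
    have hg01 : hodge F 0 1 = (1/2)*(F 2 3 - F 3 2) := by simp [hodge, eps, det_fin_four', etaSgn, Fin.sum_univ_four]; try ring
    have hg02 : hodge F 0 2 = (1/2)*(- F 1 3 + F 3 1) := by simp [hodge, eps, det_fin_four', etaSgn, Fin.sum_univ_four]; try ring
    have hg03 : hodge F 0 3 = (1/2)*(F 1 2 - F 2 1) := by simp [hodge, eps, det_fin_four', etaSgn, Fin.sum_univ_four]; try ring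
    have hg10 : hodge F 1 0 = (1/2)*(- F 2 3 + F 3 2) := by simp [hodge, eps, det_fin_four', etaSgn, Fin.sum_univ_four]; try ring
    have hg12 : hodge F 1 2 = (1/2)*(- F 0 3 + F 3 0) := by simp [hodge, eps, det_fin_four', etaSgn, Fin.sum_univ_four]; try ring
    have hg13 : hodge F 1 3 = (1/2)*(F 0 2 - F 2 0) := by simp [hodge, eps, det_fin_four', etaSgn, Fin.sum_univ_four]; try ring
    have hg20 : hodge F 2 0 = (1/2)*(F 1 3 - F 3 1) := by simp [hodge, eps, det_fin_four', etaSgn, Fin.sum_univ_four]; try ring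
    have hg21 : hodge F 2 1 = (1/2)*(F 0 3 - F 3 0) := by simp [hodge, eps, det_fin_four', etaSgn, Fin.sum_univ_four]; try ring
    have hg23 : hodge F 2 3 = (1/2)*(- F 0 1 + F 1 0) := by simp [hodge, eps, det_fin_four', etaSgn, Fin.sum_univ_four]; try ring
    have hg30 : hodge F 3 0 = (1/2)*(- F 1 2 + F 2 1) := by simp [hodge, eps, det_fin_four', etaSgn, Fin.sum_univ_four]; try ring
    have hg31 : hodge F 3 1 = (1/2)*(- F 0 2 + F 2 0) := by simp [hodge, eps, det_fin_four', etaSgn, Fin.sum_univ_four]; try ring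
    have hg32 : hodge F 3 2 = (1/2)*(F 0 1 - F 1 0) := by simp [hodge, eps, det_fin_four', etaSgn, Fin.sum_univ_four]; try ring
    have hg00 : hodge F 0 0 = 0 := by simp [hodge, eps, det_fin_four', etaSgn, Fin.sum_univ_four]
    have hg11 : hodge F 1 1 = 0 := by simp [hodge, eps, det_fin_four', etaSgn, Fin.sum_univ_four]
    have hg22 : hodge F 2 2 = 0 := by simp [hodge, eps, det_fin_four', etaSgn, Fin.sum_univ_four]
    have hg33 : hodge F 3 3 = 0 := by simp [hodge, eps, det_fin_four', etaSgn, Fin.sum_univ_four]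
    simp only [formInner, Fin.sum_univ_four, hs0, hs1, hs2, hs3, hg00, hg01, hg02, hg03, hg10, hg11, hg12,
      hg13, hg20, hg21, hg22, hg23, hg30, hg31, hg32, hg33] at hN2
    simp only [anti 0 1, anti 0 2, anti 0 3, anti 1 2, anti 3 1, anti 2 3,
      z00, z11, z22, z33] at hN2
    linear_combination (-1/2 : ℝ) * hN2
  have hS : 0 < F 0 1 ^ 2 + F 0 2 ^ 2 + F 0 3 ^ 2 := by
    by_contra hc
    push_neg at hc
    have e1 : F 0 1 = 0 := by nlinarith [sq_nonneg (F 0 1), sq_nonneg (F 0 2), sq_nonneg (F 0 3)]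
    have e2 : F 0 2 = 0 := by nlinarith [sq_nonneg (F 0 1), sq_nonneg (F 0 2), sq_nonneg (F 0 3)]
    have e3 : F 0 3 = 0 := by nlinarith [sq_nonneg (F 0 1), sq_nonneg (F 0 2), sq_nonneg (F 0 3)]
    have b1 : F 2 3 = 0 := by nlinarith [sq_nonneg (F 2 3), sq_nonneg (F 3 1), sq_nonneg (F 1 2)]
    have b2 : F 3 1 = 0 := by nlinarith [sq_nonneg (F 2 3), sq_nonneg (F 3 1), sq_nonneg (F 1 2)]
    have b3 : F 1 2 = 0 := by nlinarith [sq_nonneg (F 2 3), sq_nonneg (F 3 1), sq_nonneg (F 1 2)]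
    have f10 : F 1 0 = 0 := by rw [anti 0 1, e1]; ring
    have f20 : F 2 0 = 0 := by rw [anti 0 2, e2]; ring
    have f30 : F 3 0 = 0 := by rw [anti 0 3, e3]; ring
    have f21 : F 2 1 = 0 := by rw [anti 1 2, b3]; ring
    have f13 : F 1 3 = 0 := by rw [anti 3 1, b2]; ring
    have f32 : F 3 2 = 0 := by rw [anti 2 3, b1]; ring
    apply hne
    ext i j
    fin_cases i <;> fin_cases j <;> simp only [Matrix.zero_apply] <;>
      first
        | exact z00 | exact z11 | exact z22 | exact z33
        | exact e1 | exact e2 | exact e3 | exact b1 | exact b2 | exact b3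
        | exact f10 | exact f20 | exact f30 | exact f21 | exact f13 | exact f32
  have he : 0 < Real.sqrt (F 0 1 ^ 2 + F 0 2 ^ 2 + F 0 3 ^ 2) := Real.sqrt_pos.mpr hS
  have he2 : Real.sqrt (F 0 1 ^ 2 + F 0 2 ^ 2 + F 0 3 ^ 2) ^ 2 = F 0 1 ^ 2 + F 0 2 ^ 2 + F 0 3 ^ 2 := Real.sq_sqrt hS.le
  set e := Real.sqrt (F 0 1 ^ 2 + F 0 2 ^ 2 + F 0 3 ^ 2) with he_def
  have hene : e ≠ 0 := ne_of_gt he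
  have hw : (F 3 1 * F 0 3 - F 1 2 * F 0 2) ^ 2 + (F 1 2 * F 0 1 - F 2 3 * F 0 3) ^ 2 + (F 2 3 * F 0 2 - F 3 1 * F 0 1) ^ 2 = (F 0 1 ^ 2 + F 0 2 ^ 2 + F 0 3 ^ 2) ^ 2 := by
    linear_combination (F 0 1 ^ 2 + F 0 2 ^ 2 + F 0 3 ^ 2) * h1 - (F 0 1 * F 2 3 + F 0 2 * F 3 1 + F 0 3 * F 1 2) * h2
  have hkey1 : ∀ x : V4, ((F 3 1 * F 0 3 - F 1 2 * F 0 2) * x 1 + (F 1 2 * F 0 1 - F 2 3 * F 0 3) * x 2 + (F 2 3 * F 0 2 - F 3 1 * F 0 1) * x 3) * (F 3 1 * F 0 3 - F 1 2 * F 0 2) + (F 0 1 ^ 2 + F 0 2 ^ 2 + F 0 3 ^ 2) * ((F 0 1 * x 1 + F 0 2 * x 2 + F 0 3 * x 3) * F 0 1) + (F 0 1 ^ 2 + F 0 2 ^ 2 + F 0 3 ^ 2) * ((F 2 3 * x 1 + F 3 1 * x 2 + F 1 2 * x 3) * F 2 3) = (F 0 1 ^ 2 + F 0 2 ^ 2 +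 F 0 3 ^ 2) ^ 2 * x 1 := by
    intro x
    linear_combination ((-(F 0 1 * (F 0 1 * x 1 + F 0 2 * x 2 + F 0 3 * x 3))) + (F 0 1 ^ 2 + F 0 2 ^ 2 + F 0 3 ^ 2) * x 1) * h1 + (F 0 1 * F 2 3 * x 1 - F 0 2 * F 3 1 * x 1 - F 0 3 * F 1 2 * x 1 + (F 0 1 * F 3 1 + F 0 2 * F 2 3) * x 2 + (F 0 1 * F 1 2 + F 0 3 * F 2 3) * x 3) * h2
  have hkey2 : ∀ x : V4, ((F 3 1 * F 0 3 - F 1 2 * F 0 2) * x 1 + (F 1 2 * F 0 1 - F 2 3 * F 0 3) * x 2 + (F 2 3 * F 0 2 - F 3 1 * F 0 1) * x 3) * (F 1 2 * F 0 1 - F 2 3 * F 0 3) + (F 0 1 ^ 2 + F 0 2 ^ 2 + F 0 3 ^ 2) * ((F 0 1 * x 1 + F 0 2 * x 2 + F 0 3 * x 3) * F 0 2) + (F 0 1 ^ 2 + F 0 2 ^ 2 + F 0 3 ^ 2) * ((F 2 3 * x 1 + F 3 1 * x 2 + F 1 2 * x 3) * F 3 1) = (F 0 1 ^ 2 + F 0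 2 ^ 2 + F 0 3 ^ 2) ^ 2 * x 2 := by
    intro x
    linear_combination ((-(F 0 2 * (F 0 1 * x 1 + F 0 2 * x 2 + F 0 3 * x 3))) + (F 0 1 ^ 2 + F 0 2 ^ 2 + F 0 3 ^ 2) * x 2) * h1 + ((F 0 1 * F 3 1 + F 0 2 * F 2 3) * x 1 + (-(F 0 1 * F 2 3) + F 0 2 * F 3 1 - F 0 3 * F 1 2) * x 2 + (F 0 2 * F 1 2 + F 0 3 * F 3 1) * x 3) * h2
  have hkey3 : ∀ x : V4, ((F 3 1 * F 0 3 - F 1 2 * F 0 2) * x 1 + (F 1 2 * F 0 1 - F 2 3 * F 0 3) * x 2 + (F 2 3 * F 0 2 - F 3 1 * F 0 1) * x 3) * (F 2 3 * F 0 2 - F 3 1 * F 0 1) + (F 0 1 ^ 2 + F 0 2 ^ 2 + F 0 3 ^ 2) * ((F 0 1 * x 1 + F 0 2 * x 2 + F 0 3 * x 3) * F 0 3) + (F 0 1 ^ 2 + F 0 2 ^ 2 + F 0 3 ^ 2) * ((F 2 3 * x 1 + F 3 1 * x 2 + F 1 2 * x 3) * F 1 2) = (F 0 1 ^ 2 +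 F 0 2 ^ 2 + F 0 3 ^ 2) ^ 2 * x 3 := by
    intro x
    linear_combination ((-(F 0 3 * (F 0 1 * x 1 + F 0 2 * x 2 + F 0 3 * x 3))) + (F 0 1 ^ 2 + F 0 2 ^ 2 + F 0 3 ^ 2) * x 3) * h1 + ((F 0 1 * F 1 2 + F 0 3 * F 2 3) * x 1 + (F 0 2 * F 1 2 + F 0 3 * F 3 1) * x 2 + (-(F 0 1 * F 2 3) - F 0 2 * F 3 1 + F 0 3 * F 1 2) * x 3) * h2
  -- the candidate vector
  set L : V4 := ![e, (F 3 1 * F 0 3 - F 1 2 * F 0 2) / e, (F 1 2 * F 0 1 - F 2 3 * F 0 3) / e, (F 2 3 * F 0 2 - F 3 1 * F 0 1) / e] with hL_def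
  have hL0 : L 0 = e := rfl
  have hL1 : L 1 = (F 3 1 * F 0 3 - F 1 2 * F 0 2) / e := rfl
  have hL2 : L 2 = (F 1 2 * F 0 1 - F 2 3 * F 0 3) / e := rfl
  have hL3 : L 3 = (F 2 3 * F 0 2 - F 3 1 * F 0 1) / e := rfl
  have hSne : (F 0 1 ^ 2 + F 0 2 ^ 2 + F 0 3 ^ 2) ≠ 0 := ne_of_gt hS
  have hLnull : etaB L L = 0 := by
    have hval : etaB L L = -(e ^ 2) + ((F 3 1 * F 0 3 - F 1 2 * F 0 2) ^ 2 + (F 1 2 * F 0 1 - F 2 3 * F 0 3) ^ 2 + (F 2 3 * F 0 2 - F 3 1 * F 0 1) ^ 2) / e ^ 2 := by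
      simp only [etaB, Fin.sum_univ_four, hs0, hs1, hs2, hs3, hL0, hL1, hL2, hL3]
      field_simp
      ring
    have hnum : (F 3 1 * F 0 3 - F 1 2 * F 0 2) ^ 2 + (F 1 2 * F 0 1 - F 2 3 * F 0 3) ^ 2 + (F 2 3 * F 0 2 - F 3 1 * F 0 1) ^ 2 = e ^ 4 := by
      rw [hw, ← he2]; ring
    rw [hval, hnum, show e ^ 4 = e ^ 2 * e ^ 2 from by ring, mul_div_assoc,
      div_self (pow_ne_zero 2 hene), mul_one]
    ring
  have hLmain : ∀ x : V4, act F (act F x) = (-(etaB L x)) • L := by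
    intro x
    funext a
    have hetaLx : etaB L x = -(e * x 0) + ((F 3 1 * F 0 3 - F 1 2 * F 0 2) / e * x 1 + (F 1 2 * F 0 1 - F 2 3 * F 0 3) / e * x 2 + (F 2 3 * F 0 2 - F 3 1 * F 0 1) / e * x 3) := by
      simp only [etaB, Fin.sum_univ_four, hs0, hs1, hs2, hs3, hL0, hL1, hL2, hL3]; ring
    fin_cases a
    · show act F (act F x) 0 = ((-(etaB L x)) • L) 0
      simp only [act, Fin.sum_univ_four, hs0, hs1, hs2, hs3, Pi.smul_apply, smul_eq_mul,
        anti 0 1, anti 0 2, anti 0 3, anti 1 2, anti 3 1, anti 2 3, z00, z11, z22, z33]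
      have hr0 : -(etaB L x) * L 0 = e ^ 2 * x 0 - ((F 3 1 * F 0 3 - F 1 2 * F 0 2) * x 1 + (F 1 2 * F 0 1 - F 2 3 * F 0 3) * x 2 + (F 2 3 * F 0 2 - F 3 1 * F 0 1) * x 3) := by
        rw [hetaLx, hL0]; field_simp; ring
      rw [hr0, he2]; ring
    · show act F (act F x) 1 = ((-(etaB L x)) • L) 1
      simp only [act, Fin.sum_univ_four, hs0, hs1, hs2, hs3, Pi.smul_apply, smul_eq_mul,
        anti 0 1, anti 0 2, anti 0 3, anti 1 2, anti 3 1, anti 2 3, z00, z11, z22, z33]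
      have hk : ((F 3 1 * F 0 3 - F 1 2 * F 0 2) * x 1 + (F 1 2 * F 0 1 - F 2 3 * F 0 3) * x 2 + (F 2 3 * F 0 2 - F 3 1 * F 0 1) * x 3) * (F 3 1 * F 0 3 - F 1 2 * F 0 2) = (F 0 1 ^ 2 + F 0 2 ^ 2 + F 0 3 ^ 2) * ((F 0 1 ^ 2 + F 0 2 ^ 2 + F 0 3 ^ 2) * x 1 - (F 0 1 * x 1 + F 0 2 * x 2 + F 0 3 * x 3) * F 0 1 - (F 2 3 * x 1 + F 3 1 * x 2 + F 1 2 * x 3) * F 2 3) := by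
        linear_combination hkey1 x
      have hq : ((F 3 1 * F 0 3 - F 1 2 * F 0 2) * x 1 + (F 1 2 * F 0 1 - F 2 3 * F 0 3) * x 2 + (F 2 3 * F 0 2 - F 3 1 * F 0 1) * x 3) * (F 3 1 * F 0 3 - F 1 2 * F 0 2) / e ^ 2 = (F 0 1 ^ 2 + F 0 2 ^ 2 + F 0 3 ^ 2) * x 1 - (F 0 1 * x 1 + F 0 2 * x 2 + F 0 3 * x 3) * F 0 1 - (F 2 3 * x 1 + F 3 1 * x 2 + F 1 2 * x 3) * F 2 3 := by
        rw [he2, hk, mul_div_cancel_left₀ _ hSne]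
      have hr : -(etaB L x) * L 1 = x 0 * (F 3 1 * F 0 3 - F 1 2 * F 0 2) - ((F 3 1 * F 0 3 - F 1 2 * F 0 2) * x 1 + (F 1 2 * F 0 1 - F 2 3 * F 0 3) * x 2 + (F 2 3 * F 0 2 - F 3 1 * F 0 1) * x 3) * (F 3 1 * F 0 3 - F 1 2 * F 0 2) / e ^ 2 := by
        rw [hetaLx, hL1]; field_simp; ring
      rw [hr, hq]
      linear_combination (- x 1) * h1
    · show act F (act F x) 2 = ((-(etaB L x)) • L) 2
      simp only [act, Fin.sum_univ_four, hs0, hs1, hs2, hs3, Pi.smul_apply, smul_eq_mul,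
        anti 0 1, anti 0 2, anti 0 3, anti 1 2, anti 3 1, anti 2 3, z00, z11, z22, z33]
      have hk : ((F 3 1 * F 0 3 - F 1 2 * F 0 2) * x 1 + (F 1 2 * F 0 1 - F 2 3 * F 0 3) * x 2 + (F 2 3 * F 0 2 - F 3 1 * F 0 1) * x 3) * (F 1 2 * F 0 1 - F 2 3 * F 0 3) = (F 0 1 ^ 2 + F 0 2 ^ 2 + F 0 3 ^ 2) * ((F 0 1 ^ 2 + F 0 2 ^ 2 + F 0 3 ^ 2) * x 2 - (F 0 1 * x 1 + F 0 2 * x 2 + F 0 3 * x 3) * F 0 2 - (F 2 3 * x 1 + F 3 1 * x 2 + F 1 2 * x 3) * F 3 1) := by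
        linear_combination hkey2 x
      have hq : ((F 3 1 * F 0 3 - F 1 2 * F 0 2) * x 1 + (F 1 2 * F 0 1 - F 2 3 * F 0 3) * x 2 + (F 2 3 * F 0 2 - F 3 1 * F 0 1) * x 3) * (F 1 2 * F 0 1 - F 2 3 * F 0 3) / e ^ 2 = (F 0 1 ^ 2 + F 0 2 ^ 2 + F 0 3 ^ 2) * x 2 - (F 0 1 * x 1 + F 0 2 * x 2 + F 0 3 * x 3) * F 0 2 - (F 2 3 * x 1 + F 3 1 * x 2 + F 1 2 * x 3) * F 3 1 := by
        rw [he2, hk, mul_div_cancel_left₀ _ hSne]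
      have hr : -(etaB L x) * L 2 = x 0 * (F 1 2 * F 0 1 - F 2 3 * F 0 3) - ((F 3 1 * F 0 3 - F 1 2 * F 0 2) * x 1 + (F 1 2 * F 0 1 - F 2 3 * F 0 3) * x 2 + (F 2 3 * F 0 2 - F 3 1 * F 0 1) * x 3) * (F 1 2 * F 0 1 - F 2 3 * F 0 3) / e ^ 2 := by
        rw [hetaLx, hL2]; field_simp; ring
      rw [hr, hq]
      linear_combination (- x 2) * h1
    · show act F (act F x) 3 = ((-(etaB L x)) • L) 3
      simp only [act, Fin.sum_univ_four, hs0, hs1, hs2, hs3, Pi.smul_apply, smul_eq_mul,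
        anti 0 1, anti 0 2, anti 0 3, anti 1 2, anti 3 1, anti 2 3, z00, z11, z22, z33]
      have hk : ((F 3 1 * F 0 3 - F 1 2 * F 0 2) * x 1 + (F 1 2 * F 0 1 - F 2 3 * F 0 3) * x 2 + (F 2 3 * F 0 2 - F 3 1 * F 0 1) * x 3) * (F 2 3 * F 0 2 - F 3 1 * F 0 1) = (F 0 1 ^ 2 + F 0 2 ^ 2 + F 0 3 ^ 2) * ((F 0 1 ^ 2 + F 0 2 ^ 2 + F 0 3 ^ 2) * x 3 - (F 0 1 * x 1 + F 0 2 * x 2 + F 0 3 * x 3) * F 0 3 - (F 2 3 * x 1 + F 3 1 * x 2 + F 1 2 * x 3) * F 1 2) := by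
        linear_combination hkey3 x
      have hq : ((F 3 1 * F 0 3 - F 1 2 * F 0 2) * x 1 + (F 1 2 * F 0 1 - F 2 3 * F 0 3) * x 2 + (F 2 3 * F 0 2 - F 3 1 * F 0 1) * x 3) * (F 2 3 * F 0 2 - F 3 1 * F 0 1) / e ^ 2 = (F 0 1 ^ 2 + F 0 2 ^ 2 + F 0 3 ^ 2) * x 3 - (F 0 1 * x 1 + F 0 2 * x 2 + F 0 3 * x 3) * F 0 3 - (F 2 3 * x 1 + F 3 1 * x 2 + F 1 2 * x 3) * F 1 2 := by
        rw [he2, hk, mul_div_cancel_left₀ _ hSne]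
      have hr : -(etaB L x) * L 3 = x 0 * (F 2 3 * F 0 2 - F 3 1 * F 0 1) - ((F 3 1 * F 0 3 - F 1 2 * F 0 2) * x 1 + (F 1 2 * F 0 1 - F 2 3 * F 0 3) * x 2 + (F 2 3 * F 0 2 - F 3 1 * F 0 1) * x 3) * (F 2 3 * F 0 2 - F 3 1 * F 0 1) / e ^ 2 := by
        rw [hetaLx, hL3]; field_simp; ring
      rw [hr, hq]
      linear_combination (- x 3) * h1
  -- uniqueness helper
  have uniq : ∀ p q : V4,
      (0 < p 0 ∧ ∀ x : V4, act F (act F x) = (-(etaB p x)) • p) →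
      (0 < q 0 ∧ ∀ x : V4, act F (act F x) = (-(etaB q x)) • q) → p = q := by
    intro p q hp hq
    have hb : ∀ r : V4, (-(etaB r ((fun i => if i = 0 then (1:ℝ) else 0) : V4))) = r 0 := by
      intro r; simp [etaB, Fin.sum_univ_four, hs0, hs1, hs2, hs3]
    have hpq : (p 0) • p = (q 0) • q := by
      have h1p := hp.2 ((fun i => if i = 0 then (1:ℝ) else 0) : V4)
      have h1q := hq.2 ((fun i => if i = 0 then (1:ℝ) else 0) : V4)
      rw [hb p] at h1p; rw [hb q] at h1q
      exact h1p.symm.trans h1q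
    have h00 : p 0 * p 0 = q 0 * q 0 := by
      have := congrFun hpq 0; simpa [Pi.smul_apply, smul_eq_mul] using this
    have h0 : p 0 = q 0 := aux_sq_eq_of_pos hp.1 hq.1 h00
    funext i
    have := congrFun hpq i
    simp only [Pi.smul_apply, smul_eq_mul, h0] at this
    exact mul_left_cancel₀ (ne_of_gt hq.1) this
  constructor
  · exact ⟨L, ⟨hLnull, by rw [hL0]; exact he, hLmain⟩,
      fun y hy => uniq y L ⟨hy.2.1, hy.2.2⟩ ⟨by rw [hL0]; exact he, hLmain⟩⟩
  · rintro ℓ ⟨hnull, hpos, hmain⟩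
    have hcons : ∀ x : V4, etaB (act F (act F x)) x = -(etaB ℓ x) ^ 2 := by
      intro x; rw [hmain x, etaB_smul_left]; ring
    refine ⟨hcons, ?_⟩
    intro x hxt hx0
    have hll : ℓ 0 ^ 2 = ℓ 1 ^ 2 + ℓ 2 ^ 2 + ℓ 3 ^ 2 := by
      simp only [etaB, Fin.sum_univ_four, hs0, hs1, hs2, hs3] at hnull
      linear_combination -hnull
    have hxx : x 1 ^ 2 + x 2 ^ 2 + x 3 ^ 2 < x 0 ^ 2 := by
      simp only [etaB, Fin.sum_univ_four, hs0, hs1, hs2, hs3] at hxt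
      linarith [hxt]
    have hlx : etaB ℓ x < 0 := by
      have hrw : etaB ℓ x = -(ℓ 0 * x 0) + (ℓ 1 * x 1 + ℓ 2 * x 2 + ℓ 3 * x 3) := by
        simp only [etaB, Fin.sum_univ_four, hs0, hs1, hs2, hs3]; ring
      rw [hrw]
      exact aux_timelike hll hpos hxx hx0
    have hpos2 : 0 < -(etaB (act F (act F x)) x) := by
      rw [hcons x]; exact aux_sq_pos hlx
    have hsqrt : Real.sqrt (-(etaB (act F (act F x)) x)) = -(etaB ℓ x) := by
      rw [hcons x, neg_neg, Real.sqrt_sq_eq_abs, abs_of_neg hlx]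
    refine ⟨hlx, hpos2, ?_⟩
    rw [hsqrt, hmain x]
    exact (inv_smul_smul₀ (ne_of_gt (by linarith : (0:ℝ) < -(etaB ℓ x))) ℓ).symm



end
end

section
/- Let U be a t-volume on Minkowski space and let ℓ be a nonzero null vector with U(ℓ) ∧ ℓ = 0 (i.e., U(ℓ) is proportional to ℓ). Then U(ℓ) = ε·ℓ with ε = 1 or ε = −1. -/
open Matrix BigOperators

noncomputable section

/-! ### Auxiliary lemmas -/

@[simp] lemma etaSgn0 : etaSgn 0 = -1 := by simp +decide [etaSgn]
@[simp] lemma etaSgn1 : etaSgn 1 = 1 := by simp +decide [etaSgn]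
@[simp] lemma etaSgn2 : etaSgn 2 = 1 := by simp +decide [etaSgn]
@[simp] lemma etaSgn3 : etaSgn 3 = 1 := by simp +decide [etaSgn]

lemma etaSgn_cases (i : Fin 4) : etaSgn i = 1 ∨ etaSgn i = -1 := by
  unfold etaSgn; split <;> simp

@[simp] lemma eps_d01 (a c d : Fin 4) : eps a a c d = 0 :=
  Matrix.det_zero_of_row_eq (i := 0) (j := 1) (by decide) rfl
@[simp] lemma eps_d02 (a b d : Fin 4) : eps a b a d = 0 :=
  Matrix.det_zero_of_row_eq (i := 0) (j := 2) (by decide) rfl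
@[simp] lemma eps_d03 (a b c : Fin 4) : eps a b c a = 0 :=
  Matrix.det_zero_of_row_eq (i := 0) (j := 3) (by decide) rfl
@[simp] lemma eps_d12 (a b d : Fin 4) : eps a b b d = 0 :=
  Matrix.det_zero_of_row_eq (i := 1) (j := 2) (by decide) rfl
@[simp] lemma eps_d13 (a b c : Fin 4) : eps a b c b = 0 :=
  Matrix.det_zero_of_row_eq (i := 1) (j := 3) (by decide) rfl
@[simp] lemma eps_d23 (a b c : Fin 4) : eps a b c c = 0 :=
  Matrix.det_zero_of_row_eq (i := 2) (j := 3) (by decide) rfl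

@[simp] lemma eps_0123 : eps 0 1 2 3 = 1 := by simp +decide [eps, Matrix.det_succ_row_zero, Fin.sum_univ_succ]
@[simp] lemma eps_0132 : eps 0 1 3 2 = -1 := by simp +decide [eps, Matrix.det_succ_row_zero, Fin.sum_univ_succ]
@[simp] lemma eps_0213 : eps 0 2 1 3 = -1 := by simp +decide [eps, Matrix.det_succ_row_zero, Fin.sum_univ_succ]
@[simp] lemma eps_0231 : eps 0 2 3 1 = 1 := by simp +decide [eps, Matrix.det_succ_row_zero, Fin.sum_univ_succ]
@[simp] lemma eps_0312 : eps 0 3 1 2 = 1 := by simp +decide [eps, Matrix.det_succ_row_zero, Fin.sum_univ_succ]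
@[simp] lemma eps_0321 : eps 0 3 2 1 = -1 := by simp +decide [eps, Matrix.det_succ_row_zero, Fin.sum_univ_succ]
@[simp] lemma eps_1023 : eps 1 0 2 3 = -1 := by simp +decide [eps, Matrix.det_succ_row_zero, Fin.sum_univ_succ]
@[simp] lemma eps_1032 : eps 1 0 3 2 = 1 := by simp +decide [eps, Matrix.det_succ_row_zero, Fin.sum_univ_succ]
@[simp] lemma eps_1203 : eps 1 2 0 3 = 1 := by simp +decide [eps, Matrix.det_succ_row_zero, Fin.sum_univ_succ]
@[simp] lemma eps_1230 : eps 1 2 3 0 = -1 := by simp +decide [eps, Matrix.det_succ_row_zero, Fin.sum_univ_succ]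
@[simp] lemma eps_1302 : eps 1 3 0 2 = -1 := by simp +decide [eps, Matrix.det_succ_row_zero, Fin.sum_univ_succ]
@[simp] lemma eps_1320 : eps 1 3 2 0 = 1 := by simp +decide [eps, Matrix.det_succ_row_zero, Fin.sum_univ_succ]
@[simp] lemma eps_2013 : eps 2 0 1 3 = 1 := by simp +decide [eps, Matrix.det_succ_row_zero, Fin.sum_univ_succ]
@[simp] lemma eps_2031 : eps 2 0 3 1 = -1 := by simp +decide [eps, Matrix.det_succ_row_zero, Fin.sum_univ_succ]
@[simp] lemma eps_2103 : eps 2 1 0 3 = -1 := by simp +decide [eps, Matrix.det_succ_row_zero, Fin.sum_univ_succ]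
@[simp] lemma eps_2130 : eps 2 1 3 0 = 1 := by simp +decide [eps, Matrix.det_succ_row_zero, Fin.sum_univ_succ]
@[simp] lemma eps_2301 : eps 2 3 0 1 = 1 := by simp +decide [eps, Matrix.det_succ_row_zero, Fin.sum_univ_succ]
@[simp] lemma eps_2310 : eps 2 3 1 0 = -1 := by simp +decide [eps, Matrix.det_succ_row_zero, Fin.sum_univ_succ]
@[simp] lemma eps_3012 : eps 3 0 1 2 = -1 := by simp +decide [eps, Matrix.det_succ_row_zero, Fin.sum_univ_succ]
@[simp] lemma eps_3021 : eps 3 0 2 1 = 1 := by simp +decide [eps, Matrix.det_succ_row_zero, Fin.sum_univ_succ]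
@[simp] lemma eps_3102 : eps 3 1 0 2 = 1 := by simp +decide [eps, Matrix.det_succ_row_zero, Fin.sum_univ_succ]
@[simp] lemma eps_3120 : eps 3 1 2 0 = -1 := by simp +decide [eps, Matrix.det_succ_row_zero, Fin.sum_univ_succ]
@[simp] lemma eps_3201 : eps 3 2 0 1 = -1 := by simp +decide [eps, Matrix.det_succ_row_zero, Fin.sum_univ_succ]
@[simp] lemma eps_3210 : eps 3 2 1 0 = 1 := by simp +decide [eps, Matrix.det_succ_row_zero, Fin.sum_univ_succ]

lemma hodge_explicit (p q r s t u : ℝ) :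
    hodge !![0,p,q,r; -p,0,s,t; -q,-s,0,u; -r,-t,-u,0] =
      !![0,u,-t,s; -u,0,-r,q; t,r,0,-p; -s,-q,p,0] := by
  ext a b
  fin_cases a <;> fin_cases b <;>
    · simp [hodge, etaSgn, Fin.sum_univ_four]
      try ring

lemma etaB_expand (x y : V4) :
    etaB x y = -(x 0 * y 0) + x 1 * y 1 + x 2 * y 2 + x 3 * y 3 := by
  simp only [etaB, Fin.sum_univ_four, etaSgn0, etaSgn1, etaSgn2, etaSgn3]
  ring

lemma act_smul (F : Matrix (Fin 4) (Fin 4) ℝ) (c : ℝ) (x : V4) (a : Fin 4) :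
    act F (fun i => c * x i) a = c * act F x a := by
  simp [act, Fin.sum_univ_four]; ring

lemma fUU (p q r s t u : ℝ) :
    formInner !![0,p,q,r; -p,0,s,t; -q,-s,0,u; -r,-t,-u,0]
      !![0,p,q,r; -p,0,s,t; -q,-s,0,u; -r,-t,-u,0]
      = -p^2 - q^2 - r^2 + s^2 + t^2 + u^2 := by
  simp [formInner, etaSgn, Fin.sum_univ_four]
  ring

lemma fGU (p q r s t u : ℝ) :
    formInner (hodge !![0,p,q,r; -p,0,s,t; -q,-s,0,u; -r,-t,-u,0])
      !![0,p,q,r; -p,0,s,t; -q,-s,0,u; -r,-t,-u,0]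
      = -2 * (p*u - q*t + r*s) := by
  rw [hodge_explicit]
  simp [formInner, etaSgn, Fin.sum_univ_four]
  ring

lemma I1 (p q r s t u : ℝ) (x : V4) (a : Fin 4) :
    act (hodge !![0,p,q,r; -p,0,s,t; -q,-s,0,u; -r,-t,-u,0])
      (act !![0,p,q,r; -p,0,s,t; -q,-s,0,u; -r,-t,-u,0] x) a
      = (p*u - q*t + r*s) * x a := by
  rw [hodge_explicit]
  fin_cases a <;>
    · simp [act, etaSgn, Fin.sum_univ_four]
      ring

lemma I2 (p q r s t u : ℝ) (x : V4) (a : Fin 4) :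
    act !![0,p,q,r; -p,0,s,t; -q,-s,0,u; -r,-t,-u,0]
        (act !![0,p,q,r; -p,0,s,t; -q,-s,0,u; -r,-t,-u,0] x) a
      - act (hodge !![0,p,q,r; -p,0,s,t; -q,-s,0,u; -r,-t,-u,0])
        (act (hodge !![0,p,q,r; -p,0,s,t; -q,-s,0,u; -r,-t,-u,0]) x) a
      = (p^2 + q^2 + r^2 - s^2 - t^2 - u^2) * x a := by
  rw [hodge_explicit]
  fin_cases a <;>
    · simp [act, etaSgn, Fin.sum_univ_four]
      ring

lemma skewM (p q r s t u : ℝ) (x y : V4) :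
    etaB (act !![0,p,q,r; -p,0,s,t; -q,-s,0,u; -r,-t,-u,0] x) y
      = -etaB x (act !![0,p,q,r; -p,0,s,t; -q,-s,0,u; -r,-t,-u,0] y) := by
  simp [etaB, act, etaSgn, Fin.sum_univ_four]
  ring

lemma skewG (p q r s t u : ℝ) (x y : V4) :
    etaB (act (hodge !![0,p,q,r; -p,0,s,t; -q,-s,0,u; -r,-t,-u,0]) x) y
      = -etaB x (act (hodge !![0,p,q,r; -p,0,s,t; -q,-s,0,u; -r,-t,-u,0]) y) := by
  rw [hodge_explicit]
  simp [etaB, act, etaSgn, Fin.sum_univ_four]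
  ring

lemma etaB_symm (x y : V4) : etaB x y = etaB y x := by
  rw [etaB_expand, etaB_expand]; ring

lemma null_orth (x y : V4) (hx : etaB x x = 0) (hy : etaB y y = 0)
    (hxy : etaB x y = 0) (i : Fin 4) : y 0 * x i = x 0 * y i := by
  rw [etaB_expand] at hx hy hxy
  have h1 : (y 0*x 1 - x 0*y 1)^2 + (y 0*x 2 - x 0*y 2)^2 + (y 0*x 3 - x 0*y 3)^2 = 0 := by
    linear_combination (y 0)^2 * hx + (x 0)^2 * hy - 2*(x 0)*(y 0)*hxy
  have e1 : y 0*x 1 - x 0*y 1 = 0 := by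
    nlinarith [sq_nonneg (y 0*x 1 - x 0*y 1), sq_nonneg (y 0*x 2 - x 0*y 2),
      sq_nonneg (y 0*x 3 - x 0*y 3)]
  have e2 : y 0*x 2 - x 0*y 2 = 0 := by
    nlinarith [sq_nonneg (y 0*x 1 - x 0*y 1), sq_nonneg (y 0*x 2 - x 0*y 2),
      sq_nonneg (y 0*x 3 - x 0*y 3)]
  have e3 : y 0*x 3 - x 0*y 3 = 0 := by
    nlinarith [sq_nonneg (y 0*x 1 - x 0*y 1), sq_nonneg (y 0*x 2 - x 0*y 2),
      sq_nonneg (y 0*x 3 - x 0*y 3)]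
  fin_cases i
  · show y 0 * x 0 = x 0 * y 0; ring
  · show y 0 * x 1 = x 0 * y 1; linarith
  · show y 0 * x 2 = x 0 * y 2; linarith
  · show y 0 * x 3 = x 0 * y 3; linarith

lemma null_time (x : V4) (hx0 : x ≠ 0) (hn : etaB x x = 0) : x 0 ≠ 0 := by
  intro h0
  rw [etaB_expand, h0] at hn
  apply hx0
  funext i
  have g1 : x 1 = 0 := by nlinarith [sq_nonneg (x 1), sq_nonneg (x 2), sq_nonneg (x 3)]
  have g2 : x 2 = 0 := by nlinarith [sq_nonneg (x 1), sq_nonneg (x 2), sq_nonneg (x 3)]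
  have g3 : x 3 = 0 := by nlinarith [sq_nonneg (x 1), sq_nonneg (x 2), sq_nonneg (x 3)]
  fin_cases i <;> simp [h0, g1, g2, g3]
/-- If U is a t-volume and ℓ a nonzero null vector with U(ℓ) ∧ ℓ = 0,
then U(ℓ) = ±ℓ. -/
theorem tvolume_null_eigenvector (U : Matrix (Fin 4) (Fin 4) ℝ) (hU : IsTVolume U)
    (ℓ : V4) (hℓ : ℓ ≠ 0) (hnull : etaB ℓ ℓ = 0)
    (h : wedge (act U ℓ) ℓ = 0) :
    act U ℓ = ℓ ∨ act U ℓ = -ℓ := by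
  obtain ⟨hA, hUU, hdUU⟩ := hU
  have key : ∀ i j : Fin 4, U j i = -U i j := by
    intro i j
    have := congrFun (congrFun hA i) j
    simpa using this
  obtain ⟨p, q, r, s, t, w, hUe⟩ :
      ∃ p q r s t w, U = !![0,p,q,r; -p,0,s,t; -q,-s,0,w; -r,-t,-w,0] := by
    refine ⟨U 0 1, U 0 2, U 0 3, U 1 2, U 1 3, U 2 3, ?_⟩
    ext i j
    fin_cases i <;> fin_cases j <;> simp <;>
      first
        | linarith [key 0 0]
        | linarith [key 1 1]
        | linarith [key 2 2]
        | linarith [key 3 3]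
        | linarith [key 0 1]
        | linarith [key 0 2]
        | linarith [key 0 3]
        | linarith [key 1 2]
        | linarith [key 1 3]
        | linarith [key 2 3]
  subst hUe
  rw [fUU] at hUU
  rw [fGU] at hdUU
  have hGU' : p*w - q*t + r*s = 0 := by linarith
  have hco : p^2 + q^2 + r^2 - s^2 - t^2 - w^2 = 1 := by linarith
  set M := !![0,p,q,r; -p,0,s,t; -q,-s,0,w; -r,-t,-w,0] with hM
  -- proportionality from the wedge hypothesis
  have hprop : ∀ a b : Fin 4, act M ℓ a * ℓ b = act M ℓ b * ℓ a := by
    intro a b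
    have hw : wedge (act M ℓ) ℓ a b = 0 := by rw [h]; simp
    simp only [wedge, Matrix.of_apply] at hw
    rcases etaSgn_cases a with ha | ha <;> rcases etaSgn_cases b with hb | hb <;>
      rw [ha, hb] at hw <;> nlinarith [hw]
  have hl0 : ℓ 0 ≠ 0 := null_time ℓ hℓ hnull
  set c : ℝ := act M ℓ 0 / ℓ 0 with hcdef
  have hc : ∀ i, act M ℓ i = c * ℓ i := by
    intro i
    have hp := hprop i 0
    rw [hcdef]
    field_simp
    linarith
  have hme : act M ℓ = fun i => c * ℓ i := funext hc
  by_cases hc0 : c = 0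
  · -- degenerate case: leads to a contradiction
    exfalso
    have hm0 : act M ℓ = fun _ => (0:ℝ) := by
      funext i; rw [hc i, hc0]; ring
    -- U²ℓ = 0
    have hMM : ∀ a, act M (act M ℓ) a = 0 := by
      intro a; rw [hm0]; simp [act]
    -- G²ℓ = -ℓ
    have hGG : ∀ a, act (hodge M) (act (hodge M) ℓ) a = -ℓ a := by
      intro a
      have h2 := I2 p q r s t w ℓ a
      rw [← hM] at h2
      rw [hMM a] at h2
      rw [hco] at h2
      linarith
    have hGGf : act (hodge M) (act (hodge M) ℓ) = fun a => -ℓ a := funext hGG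
    set y : V4 := act (hodge M) ℓ with hy
    -- y is null and orthogonal to ℓ
    have hyl : etaB ℓ y = 0 := by
      have hs := skewG p q r s t w ℓ ℓ
      rw [← hM] at hs
      have hsy := etaB_symm (act (hodge M) ℓ) ℓ
      rw [← hy] at hs hsy
      linarith
    have hyy : etaB y y = 0 := by
      have hs := skewG p q r s t w ℓ y
      rw [← hM] at hs
      rw [← hy] at hs
      rw [hy, hGGf] at hs
      have : etaB ℓ (fun a => -ℓ a) = -etaB ℓ ℓ := by
        rw [etaB_expand, etaB_expand]; ring
      rw [this, hnull] at hs
      have hsy := etaB_symm ℓ y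
      rw [← hy] at hs
      linarith
    -- hence y is proportional to ℓ
    have hk : ∀ i, y 0 * ℓ i = ℓ 0 * y i :=
      null_orth ℓ y hnull hyy hyl
    set k : ℝ := y 0 / ℓ 0 with hkdef
    have hky : ∀ i, y i = k * ℓ i := by
      intro i
      have := hk i
      rw [hkdef]
      field_simp
      linarith
    have hkyf : y = fun i => k * ℓ i := funext hky
    -- then G²ℓ = k²ℓ = -ℓ, impossible
    have hcontr : k * (k * ℓ 0) = -ℓ 0 := by
      have h3 := hGG 0
      rw [hkyf, act_smul (hodge M) k ℓ 0] at h3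
      have h4 : act (hodge M) ℓ 0 = k * ℓ 0 := hky 0
      rw [h4] at h3
      linarith
    have : (k * k + 1) * ℓ 0 = 0 := by linarith
    have hk2 : k * k + 1 = 0 := by
      rcases mul_eq_zero.mp this with h' | h'
      · exact h'
      · exact absurd h' hl0
    nlinarith [sq_nonneg k]
  · -- main case: c² = 1
    have hGl : ∀ a, act (hodge M) ℓ a = 0 := by
      intro a
      have h1 := I1 p q r s t w ℓ a
      rw [← hM, hGU'] at h1
      have h1' : act (hodge M) (act M ℓ) a = 0 := by rw [h1]; ring
      rw [hme, act_smul (hodge M) c ℓ a] at h1'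
      rcases mul_eq_zero.mp h1' with h' | h'
      · exact absurd h' hc0
      · exact h'
    have hGlf : act (hodge M) ℓ = fun _ => (0:ℝ) := funext hGl
    have hc2 : ∀ a, c * (c * ℓ a) = ℓ a := by
      intro a
      have h2 := I2 p q r s t w ℓ a
      rw [← hM] at h2
      rw [hme, act_smul M c ℓ a, hc a] at h2
      rw [hGlf] at h2
      have hz : act (hodge M) (fun _ => (0:ℝ)) a = 0 := by simp [act]
      rw [hz, hco] at h2
      linarith
    have hc1 : c * c = 1 := by
      have := hc2 0
      have h4 : (c * c - 1) * ℓ 0 = 0 := by linarith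
      rcases mul_eq_zero.mp h4 with h' | h'
      · linarith
      · exact absurd h' hl0
    have : (c - 1) * (c + 1) = 0 := by linarith [hc1]
    rcases mul_eq_zero.mp this with h' | h'
    · left
      funext a
      rw [hc a, show c = 1 by linarith]
      ring
    · right
      funext a
      rw [hc a, show c = -1 by linarith]
      simp

end
end

section
/- Let F be a 2-form on Minkowski space with (F,F)² + (*F,F)² ≠ 0 (a non-null 2-form). Then there exist a t-volume U and real numbers a, b such that F = a·U + b·(*U). -/
open Matrix BigOperators

noncomputable section

/-! Since `**F = -F` on 2-forms, the Hodge star is a complex structure: `c = p + iq` acts by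
`pF + q *F`. The invariant `z(F) = (F,F) - i (*F,F)` is then a complex quadratic form,
`z(cF) = c² z(F)`. For a non-null `F` we have `z(F) ≠ 0`, so some `c` satisfies `c² z(F) = -1`;
then `U = cF` is a t-volume and `F = c⁻¹U = Re(c⁻¹) U + Im(c⁻¹) *U`. -/

theorem Matrix.of_ite_mul_vandermonde {R : Type*} [CommRing R] {n : ℕ} (v : Fin n → Fin n)
    (x : Fin n → R) :
    (of fun i j => if v i = j then (1 : R) else 0) * vandermonde x = vandermonde (x ∘ v) := by
  ext i j
  simp [mul_apply, vandermonde_apply]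

/-- The matrix defining `eps` carries the Vandermonde matrix of `0, 1, 2, 3` (determinant
`1! 2! 3! = 12`) to that of `a, b, c, d`. -/
theorem eps_eq (a b c d : Fin 4) :
    eps a b c d = ((b : ℝ) - a) * (c - a) * (d - a) * (c - b) * (d - b) * (d - c) / 12 := by
  have h := congrArg det
    (of_ite_mul_vandermonde ![a, b, c, d] (fun k : Fin 4 => ((k : ℕ) : ℝ)))
  rw [det_mul, det_vandermonde_id_eq_superFactorial, det_vandermonde] at h
  simp only [← Finset.filter_lt_eq_Ioi, Finset.prod_filter, Fin.prod_univ_four] at h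
  simp [Nat.superFactorial, Nat.factorial] at h
  rw [eps, eq_div_iff (by norm_num), h]
  ring

theorem hodge_eq (F : Matrix (Fin 4) (Fin 4) ℝ) : hodge F =
    !![0, (F 2 3 - F 3 2) / 2, (F 3 1 - F 1 3) / 2, (F 1 2 - F 2 1) / 2;
       (F 3 2 - F 2 3) / 2, 0, (F 3 0 - F 0 3) / 2, (F 0 2 - F 2 0) / 2;
       (F 1 3 - F 3 1) / 2, (F 0 3 - F 3 0) / 2, 0, (F 1 0 - F 0 1) / 2;
       (F 2 1 - F 1 2) / 2, (F 2 0 - F 0 2) / 2, (F 0 1 - F 1 0) / 2, 0] := by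
  ext a b
  fin_cases a <;> fin_cases b <;> simp [hodge, eps_eq, Fin.sum_univ_four, etaSgn] <;> ring

theorem hodge_transpose (F : Matrix (Fin 4) (Fin 4) ℝ) : (hodge F)ᵀ = -hodge F := by
  rw [hodge_eq]
  ext a b
  fin_cases a <;> fin_cases b <;> simp <;> ring

theorem hodge_add (F G : Matrix (Fin 4) (Fin 4) ℝ) : hodge (F + G) = hodge F + hodge G := by
  simp only [hodge_eq, Matrix.add_apply]
  ext a b
  fin_cases a <;> fin_cases b <;> simp <;> ring

theorem hodge_smul (x : ℝ) (F : Matrix (Fin 4) (Fin 4) ℝ) : hodge (x • F) = x • hodge F := by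
  simp only [hodge_eq, Matrix.smul_apply]
  ext a b
  fin_cases a <;> fin_cases b <;> simp <;> ring

theorem hodge_hodge {F : Matrix (Fin 4) (Fin 4) ℝ} (hF : Fᵀ = -F) : hodge (hodge F) = -F := by
  have hF' (i j : Fin 4) : F j i = -F i j := by simpa using congrFun₂ hF i j
  rw [hodge_eq F, hodge_eq]
  ext a b
  fin_cases a <;> fin_cases b <;> simp <;> linarith [hF' 0 0, hF' 1 1, hF' 2 2, hF' 3 3,
    hF' 0 1, hF' 0 2, hF' 0 3, hF' 1 2, hF' 1 3, hF' 2 3]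

theorem formInner_comm (F G : Matrix (Fin 4) (Fin 4) ℝ) : formInner F G = formInner G F := by
  simp only [formInner, mul_right_comm _ (F _ _) (G _ _)]

theorem formInner_add_left (F G H : Matrix (Fin 4) (Fin 4) ℝ) :
    formInner (F + G) H = formInner F H + formInner G H := by
  simp only [formInner, Matrix.add_apply, mul_add, add_mul, Finset.sum_add_distrib]

theorem formInner_smul_left (x : ℝ) (F G : Matrix (Fin 4) (Fin 4) ℝ) :
    formInner (x • F) G = x * formInner F G := by
  simp only [formInner, Fin.sum_univ_four, Matrix.smul_apply, smul_eq_mul]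
  ring

theorem formInner_add_right (F G H : Matrix (Fin 4) (Fin 4) ℝ) :
    formInner F (G + H) = formInner F G + formInner F H := by
  rw [formInner_comm, formInner_add_left, formInner_comm G, formInner_comm H]

theorem formInner_smul_right (x : ℝ) (F G : Matrix (Fin 4) (Fin 4) ℝ) :
    formInner F (x • G) = x * formInner F G := by
  rw [formInner_comm, formInner_smul_left, formInner_comm]

theorem formInner_hodge_comm (F G : Matrix (Fin 4) (Fin 4) ℝ) :
    formInner (hodge F) G = formInner (hodge G) F := by
  simp only [hodge_eq, formInner, Fin.sum_univ_four]
  simp [etaSgn]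
  ring

theorem formInner_hodge_hodge {F : Matrix (Fin 4) (Fin 4) ℝ} (hF : Fᵀ = -F) :
    formInner (hodge F) (hodge F) = -formInner F F := by
  rw [formInner_hodge_comm, hodge_hodge hF, ← neg_one_smul ℝ F, formInner_smul_left, neg_one_mul]

def complexSmul (c : ℂ) (F : Matrix (Fin 4) (Fin 4) ℝ) : Matrix (Fin 4) (Fin 4) ℝ :=
  c.re • F + c.im • hodge F

/-- `(𝓕,𝓕) / 2` for the complex bivector `𝓕 = F - i *F`. -/
def complexInvariant (F : Matrix (Fin 4) (Fin 4) ℝ) : ℂ :=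
  ⟨formInner F F, -formInner (hodge F) F⟩

theorem complexSmul_one (F : Matrix (Fin 4) (Fin 4) ℝ) : complexSmul 1 F = F := by
  simp [complexSmul]

theorem transpose_complexSmul {F : Matrix (Fin 4) (Fin 4) ℝ} (hF : Fᵀ = -F) (c : ℂ) :
    (complexSmul c F)ᵀ = -complexSmul c F := by
  rw [complexSmul, transpose_add, transpose_smul, transpose_smul, hF, hodge_transpose]
  module

theorem hodge_complexSmul {F : Matrix (Fin 4) (Fin 4) ℝ} (hF : Fᵀ = -F) (c : ℂ) :
    hodge (complexSmul c F) = complexSmul (c * Complex.I) F := by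
  rw [complexSmul, complexSmul, hodge_add, hodge_smul, hodge_smul, hodge_hodge hF]
  simp only [Complex.mul_re, Complex.mul_im, Complex.I_re, Complex.I_im]
  module

theorem complexSmul_complexSmul {F : Matrix (Fin 4) (Fin 4) ℝ} (hF : Fᵀ = -F) (c d : ℂ) :
    complexSmul c (complexSmul d F) = complexSmul (c * d) F := by
  rw [complexSmul, hodge_complexSmul hF]
  simp only [complexSmul, Complex.mul_re, Complex.mul_im, Complex.I_re, Complex.I_im]
  module

theorem complexInvariant_complexSmul {F : Matrix (Fin 4) (Fin 4) ℝ} (hF : Fᵀ = -F) (c : ℂ) :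
    complexInvariant (complexSmul c F) = c ^ 2 * complexInvariant F := by
  rw [complexInvariant, hodge_complexSmul hF]
  simp only [complexSmul, complexInvariant, formInner_add_left, formInner_add_right,
    formInner_smul_left, formInner_smul_right, formInner_hodge_hodge hF,
    formInner_comm F (hodge F)]
  apply Complex.ext <;> simp [pow_two] <;> ring

theorem normSq_complexInvariant (F : Matrix (Fin 4) (Fin 4) ℝ) :
    Complex.normSq (complexInvariant F) = formInner F F ^ 2 + formInner (hodge F) F ^ 2 := by
  simp [complexInvariant, Complex.normSq_mk, pow_two]

theorem complexInvariant_eq_neg_one_iff (U : Matrix (Fin 4) (Fin 4) ℝ) :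
    complexInvariant U = -1 ↔ formInner U U = -1 ∧ formInner (hodge U) U = 0 := by
  simp [complexInvariant, Complex.ext_iff]

/-- A non-null 2-form F decomposes as F = a·U + b·(*U) for a t-volume U
and real numbers a, b. -/
theorem nonnull_form_decomposition (F : Matrix (Fin 4) (Fin 4) ℝ) (hF : Fᵀ = -F)
    (h : (formInner F F) ^ 2 + (formInner (hodge F) F) ^ 2 ≠ 0) :
    ∃ (U : Matrix (Fin 4) (Fin 4) ℝ) (a b : ℝ),
      IsTVolume U ∧ F = a • U + b • hodge U := by
  have hz : complexInvariant F ≠ 0 := by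
    rw [← Complex.normSq_pos, normSq_complexInvariant]
    exact lt_of_le_of_ne (by positivity) h.symm
  obtain ⟨c, hc⟩ := IsAlgClosed.exists_eq_mul_self (-(complexInvariant F)⁻¹)
  have hc0 : c ≠ 0 := by
    rintro rfl
    simp [hz] at hc
  refine ⟨complexSmul c F, c⁻¹.re, c⁻¹.im, ⟨transpose_complexSmul hF c, ?_⟩, ?_⟩
  · rw [← complexInvariant_eq_neg_one_iff, complexInvariant_complexSmul hF, pow_two, ← hc]
    field_simp
  · change F = complexSmul c⁻¹ (complexSmul c F)
    rw [complexSmul_complexSmul hF, inv_mul_cancel₀ hc0, complexSmul_one]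

end
end
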